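/- arXiv:1912.06701 — 2 statements merged into one kernel-verified Lean document; each statement's English description precedes it below -/
import Mathlib

section
/- Let ε > 0, κ ≥ ε²/2, δ ∈ (0,1), C ≥ 0, and let φ : [0,1] → [0,∞) be measurable with φ(u) = κ for u ∈ [0,δ]. Define Φ(r) = ∫_δ^r exp( −2 ∫_δ^s (φ(u) − C u)/(ε² u (1−u)) du ) ds for r ∈ (0,1). Then lim_{r→0+} Φ(r) = −∞. In particular, for any γ ≥ 1 and δ > 0, ∫_0^δ (δ/s)^γ ds = +∞. -/
/-!
On `(0, δ]` the drift is `κ - C u`, and the partial fractions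
`(κ - C u) / (u (1 - u)) = κ / u + (κ - C) / (1 - u)` make the inner integral explicit:
`Φ'(s) = (δ / s) ^ (2κ/ε²) * ((1 - s) / (1 - δ)) ^ (2(κ - C)/ε²)`.
As `2κ/ε² ≥ 1` and the second factor is bounded below on `(0, δ]`, `Φ'(s) ≥ c / s` there,
and `∫ ds / s` diverges logarithmically at `0`.
-/

open MeasureTheory intervalIntegral Set Filter Topology Real

theorem integral_sub_mul_div_mul_one_sub {a b d s t : ℝ} (hs : 0 < s) (hst : s ≤ t) (ht : t < 1) :
    ∫ u in s..t, (a - b * u) / (d * u * (1 - u))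
      = a / d * log (t / s) + (a - b) / d * log ((1 - s) / (1 - t)) := by
  rcases eq_or_ne d 0 with rfl | hd
  · simp
  have hpos : ∀ u ∈ uIcc s t, 0 < u ∧ 0 < 1 - u := fun u hu => by
    rw [uIcc_of_le hst] at hu
    exact ⟨hs.trans_le hu.1, by linarith [hu.2]⟩
  have hderiv : ∀ u ∈ uIcc s t, HasDerivAt (fun u => a / d * log u - (a - b) / d * log (1 - u))
      ((a - b * u) / (d * u * (1 - u))) u := by
    intro u hu
    obtain ⟨hu0, hu1⟩ := hpos u hu
    refine (((hasDerivAt_log hu0.ne').const_mul (a / d)).sub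
      ((((hasDerivAt_id u).const_sub 1).log hu1.ne').const_mul ((a - b) / d))).congr_deriv ?_
    simp only [id]
    field_simp
    ring
  have hcont : ContinuousOn (fun u => (a - b * u) / (d * u * (1 - u))) (uIcc s t) :=
    fun u hu => by
      obtain ⟨hu0, hu1⟩ := hpos u hu
      exact (ContinuousAt.div (by fun_prop) (by fun_prop) (by positivity)).continuousWithinAt
  rw [integral_eq_sub_of_hasDerivAt hderiv hcont.intervalIntegrable,
    log_div (by linarith) hs.ne', log_div (by linarith) (by linarith)]
  ring

theorem exp_abs_mul_log_mul_div_le {p q s t : ℝ} (hp : 1 ≤ p) (hs : 0 < s) (hst : s ≤ t)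
    (ht : t < 1) :
    exp (|q| * log (1 - t)) * (t / s) ≤ exp (p * log (t / s) + q * log ((1 - s) / (1 - t))) := by
  have hx : 0 ≤ log (t / s) := log_nonneg ((one_le_div hs).2 hst)
  have hy : 0 ≤ log ((1 - s) / (1 - t)) :=
    log_nonneg ((one_le_div (by linarith)).2 (by linarith))
  have hy' : log ((1 - s) / (1 - t)) ≤ -log (1 - t) := by
    rw [log_div (by linarith) (by linarith)]
    linarith [log_nonpos (by linarith : 0 ≤ 1 - s) (by linarith : 1 - s ≤ 1)]
  calc exp (|q| * log (1 - t)) * (t / s) = exp (log (t / s) + |q| * log (1 - t)) := by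
        rw [exp_add, exp_log (div_pos (hs.trans_le hst) hs), mul_comm]
    _ ≤ _ := by
        gcongr exp ?_
        nlinarith [mul_nonneg (sub_nonneg.2 hp) hx,
          mul_nonneg (neg_le_iff_add_nonneg.1 (neg_abs_le q)) hy,
          mul_nonneg (abs_nonneg q) (sub_nonneg.2 hy')]

theorem tendsto_intervalIntegral_nhdsGT_zero_atBot {f : ℝ → ℝ} {c t : ℝ} (hc : 0 < c)
    (ht : 0 < t) (hf : ∀ r ∈ Ioo 0 t, IntervalIntegrable f volume r t)
    (hle : ∀ s ∈ Ioc 0 t, c / s ≤ f s) :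
    Tendsto (fun r => ∫ s in t..r, f s) (𝓝[>] 0) atBot := by
  have hbound : ∀ r ∈ Ioo 0 t, ∫ s in t..r, f s ≤ c * log r + -(c * log t) := by
    rintro r ⟨hr, hrt⟩
    have hinv : IntervalIntegrable (fun s => c / s) volume r t :=
      (continuousOn_const.div continuousOn_id fun s hs =>
        (hr.trans_le (uIcc_of_le hrt.le ▸ hs).1).ne').intervalIntegrable
    have hlog : c * log (t / r) ≤ ∫ s in r..t, f s := calc
      c * log (t / r) = ∫ s in r..t, c / s := by
        simp only [div_eq_mul_inv c, intervalIntegral.integral_const_mul,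
          integral_inv_of_pos hr ht]
      _ ≤ ∫ s in r..t, f s :=
        integral_mono_on hrt.le hinv (hf r ⟨hr, hrt⟩) fun s hs => hle s ⟨hr.trans_le hs.1, hs.2⟩
    rw [log_div ht.ne' hr.ne'] at hlog
    rw [integral_symm]
    linarith
  refine tendsto_atBot_mono' _ ?_
    (tendsto_atBot_add_const_right _ (-(c * log t)) (tendsto_log_nhdsGT_zero.const_mul_atBot hc))
  filter_upwards [Ioo_mem_nhdsGT ht] with r hr using hbound r hr

theorem lintegral_ofReal_div_rpow_Ioo_eq_top {γ t : ℝ} (hγ : 1 ≤ γ) (ht : 0 < t) :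
    ∫⁻ s in Ioo 0 t, ENNReal.ofReal ((t / s) ^ γ) = ⊤ := by
  by_contra h
  have hint : IntegrableOn (fun s => (t / s) ^ γ) (Ioo 0 t) :=
    (lintegral_ofReal_ne_top_iff_integrable
      ((measurable_const.div measurable_id).pow_const γ).aestronglyMeasurable
      ((ae_restrict_iff' measurableSet_Ioo).2 (ae_of_all _ fun s hs =>
        rpow_nonneg (div_pos ht hs.1).le γ))).1 h
  have hpow : IntegrableOn (fun s => s ^ (-γ)) (Ioo 0 t) := by
    refine IntegrableOn.congr_fun (hint.const_mul (t ^ γ)⁻¹) (fun s hs => ?_) measurableSet_Ioo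
    rw [div_rpow ht.le hs.1.le, rpow_neg hs.1.le]
    field_simp
  linarith [(integrableOn_Ioo_rpow_iff ht).1 hpow]

noncomputable def scaleDensity (ε C δ : ℝ) (φ : ℝ → ℝ) (s : ℝ) : ℝ :=
  exp (-2 * ∫ u in δ..s, (φ u - C * u) / (ε ^ 2 * u * (1 - u)))

section ConstantNearZero

variable {ε κ δ C s : ℝ} {φ : ℝ → ℝ}

theorem scaleDensity_eq_of_le (hφκ : ∀ u ∈ Icc 0 δ, φ u = κ) (hs : 0 < s) (hsδ : s ≤ δ)
    (hδ : δ < 1) :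
    scaleDensity ε C δ φ s
      = exp (2 * κ / ε ^ 2 * log (δ / s) + 2 * (κ - C) / ε ^ 2 * log ((1 - s) / (1 - δ))) := by
  have hφ : EqOn (fun u => (φ u - C * u) / (ε ^ 2 * u * (1 - u)))
      (fun u => (κ - C * u) / (ε ^ 2 * u * (1 - u))) (uIcc s δ) := fun u hu => by
    rw [uIcc_of_le hsδ] at hu
    simp only [hφκ u ⟨hs.le.trans hu.1, hu.2⟩]
  rw [scaleDensity, integral_symm, integral_congr hφ,
    integral_sub_mul_div_mul_one_sub hs hsδ hδ]
  ring_nf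

theorem intervalIntegrable_scaleDensity (hφκ : ∀ u ∈ Icc 0 δ, φ u = κ) {r : ℝ} (hr : 0 < r)
    (hrδ : r ≤ δ) (hδ : δ < 1) :
    IntervalIntegrable (scaleDensity ε C δ φ) volume r δ := by
  apply ContinuousOn.intervalIntegrable
  rw [uIcc_of_le hrδ]
  refine ContinuousOn.congr (fun s hs => ?_)
    fun s hs => scaleDensity_eq_of_le hφκ (hr.trans_le hs.1) hs.2 hδ
  have hs0 : s ≠ 0 := (hr.trans_le hs.1).ne'
  have hδs : δ / s ≠ 0 := (div_pos (hr.trans_le hrδ) (hr.trans_le hs.1)).ne'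
  have hδ1 : 1 - δ ≠ 0 := by linarith
  have hsδ : (1 - s) / (1 - δ) ≠ 0 := (div_pos (by linarith [hs.2]) (by linarith)).ne'
  exact ContinuousAt.continuousWithinAt (by fun_prop (disch := assumption))

end ConstantNearZero

theorem feller_scale_diverges_general (ε : ℝ) (hε : 0 < ε) (κ : ℝ) (hκ : ε ^ 2 / 2 ≤ κ)
    (δ : ℝ) (hδ0 : 0 < δ) (hδ1 : δ < 1) (C : ℝ)
    (φ : ℝ → ℝ)
    (hφκ : ∀ u ∈ Set.Icc (0 : ℝ) δ, φ u = κ)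
    (Φ : ℝ → ℝ)
    (hΦ : ∀ r ∈ Set.Ioo (0 : ℝ) 1,
      Φ r = ∫ s in δ..r,
        Real.exp (-2 * ∫ u in δ..s, (φ u - C * u) / (ε ^ 2 * u * (1 - u)))) :
    Filter.Tendsto Φ (nhdsWithin 0 (Set.Ioi 0)) Filter.atBot ∧
    (∀ γ : ℝ, 1 ≤ γ → ∀ δ' : ℝ, 0 < δ' →
      ∫⁻ s in Set.Ioo (0 : ℝ) δ', ENNReal.ofReal ((δ' / s) ^ γ) = ⊤) := by
  refine ⟨?_, fun γ hγ δ' hδ' => lintegral_ofReal_div_rpow_Ioo_eq_top hγ hδ'⟩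
  have hp : 1 ≤ 2 * κ / ε ^ 2 := by
    rw [le_div_iff₀ (by positivity)]
    linarith
  have hlower : ∀ s ∈ Ioc 0 δ,
      exp (|2 * (κ - C) / ε ^ 2| * log (1 - δ)) * δ / s ≤ scaleDensity ε C δ φ s :=
    fun s hs => by
      rw [scaleDensity_eq_of_le hφκ hs.1 hs.2 hδ1, mul_div_assoc]
      exact exp_abs_mul_log_mul_div_le hp hs.1 hs.2 hδ1
  refine (tendsto_intervalIntegral_nhdsGT_zero_atBot (by positivity) hδ0
    (fun r hr => intervalIntegrable_scaleDensity hφκ hr.1 hr.2.le hδ1) hlower).congr' ?_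
  filter_upwards [Ioo_mem_nhdsGT one_pos] with r hr using (hΦ r hr).symm

/-- Feller-test criterion: the natural scale function of the forced Wright–Fisher
1d diffusion diverges to −∞ at the boundary point 0, and in particular
∫_0^δ (δ/s)^γ ds = +∞ for γ ≥ 1. -/
theorem feller_scale_diverges (ε : ℝ) (hε : 0 < ε) (κ : ℝ) (hκ : ε ^ 2 / 2 ≤ κ)
    (δ : ℝ) (hδ0 : 0 < δ) (hδ1 : δ < 1) (C : ℝ) (hC : 0 ≤ C)
    (φ : ℝ → ℝ) (hφmeas : Measurable φ)
    (hφnn : ∀ u ∈ Set.Icc (0 : ℝ) 1, 0 ≤ φ u)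
    (hφκ : ∀ u ∈ Set.Icc (0 : ℝ) δ, φ u = κ)
    (Φ : ℝ → ℝ)
    (hΦ : ∀ r ∈ Set.Ioo (0 : ℝ) 1,
      Φ r = ∫ s in δ..r,
        Real.exp (-2 * ∫ u in δ..s, (φ u - C * u) / (ε ^ 2 * u * (1 - u)))) :
    Filter.Tendsto Φ (nhdsWithin 0 (Set.Ioi 0)) Filter.atBot ∧
    (∀ γ : ℝ, 1 ≤ γ → ∀ δ' : ℝ, 0 < δ' →
      ∫⁻ s in Set.Ioo (0 : ℝ) δ', ENNReal.ofReal ((δ' / s) ^ γ) = ⊤) :=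
  feller_scale_diverges_general ε hε κ hκ δ hδ0 hδ1 C φ hφκ Φ hΦ
end

section
/- Let n ≥ 1, a ∈ (0,1], and let y, y' ∈ ℝ^n satisfy y_i ≥ 0, y'_i ≥ 0, ∑_{i=1}^n y_i ≤ 1 − a, ∑_{i=1}^n y'_i ≤ 1 − a. Then |√(1 − ∑_i y_i) − √(1 − ∑_i y'_i)| ≤ (1/√a) ∑_{i=1}^n |√y_i − √y'_i|. -/
/-!
Rationalising, `|√u - √v| (√u + √v) = |u - v|`. Since `1 - ∑ y_i` and `1 - ∑ y'_i` are both at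
least `a`, the sum of their square roots is at least `2√a`, so the left side is at most
`|∑ y_i - ∑ y'_i| / (2√a)`. In the other direction every coordinate lies in `[0, 1]`, so
`√y_i + √y'_i ≤ 2` and `|y_i - y'_i| ≤ 2 |√y_i - √y'_i|`; summing gives the factor `2` that cancels.
-/

open Finset Real

theorem abs_sqrt_sub_sqrt_mul_sqrt_add {u v : ℝ} (hu : 0 ≤ u) (hv : 0 ≤ v) :
    |√u - √v| * (√u + √v) = |u - v| := by
  rw [← abs_of_nonneg (add_nonneg (sqrt_nonneg u) (sqrt_nonneg v)), ← abs_mul]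
  congr 1
  linear_combination sq_sqrt hu - sq_sqrt hv

theorem abs_sqrt_sub_sqrt_le_of_le {c u v : ℝ} (hc : 0 < c) (hu : c ≤ u) (hv : c ≤ v) :
    |√u - √v| ≤ |u - v| / (2 * √c) := by
  have hsum : 2 * √c ≤ √u + √v := by
    linarith [sqrt_le_sqrt hu, sqrt_le_sqrt hv]
  rw [le_div_iff₀ (by positivity),
    ← abs_sqrt_sub_sqrt_mul_sqrt_add (hc.le.trans hu) (hc.le.trans hv)]
  exact mul_le_mul_of_nonneg_left hsum (abs_nonneg _)

theorem abs_sub_le_two_mul_abs_sqrt_sub_sqrt {u v : ℝ} (hu : 0 ≤ u) (hv : 0 ≤ v)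
    (hu1 : u ≤ 1) (hv1 : v ≤ 1) : |u - v| ≤ 2 * |√u - √v| := by
  have hsum : √u + √v ≤ 2 := by
    linarith [sqrt_le_one.mpr hu1, sqrt_le_one.mpr hv1]
  rw [← abs_sqrt_sub_sqrt_mul_sqrt_add hu hv, mul_comm]
  exact mul_le_mul_of_nonneg_right hsum (abs_nonneg _)

theorem abs_sum_sub_sum_le_two_mul_sum_abs_sqrt_sub_sqrt {ι : Type*} (s : Finset ι)
    {f g : ι → ℝ} (hf : ∀ i ∈ s, 0 ≤ f i) (hg : ∀ i ∈ s, 0 ≤ g i)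
    (hf1 : ∀ i ∈ s, f i ≤ 1) (hg1 : ∀ i ∈ s, g i ≤ 1) :
    |∑ i ∈ s, f i - ∑ i ∈ s, g i| ≤ 2 * ∑ i ∈ s, |√(f i) - √(g i)| := by
  rw [← sum_sub_distrib, mul_sum]
  exact (abs_sum_le_sum_abs _ _).trans <| sum_le_sum fun i hi =>
    abs_sub_le_two_mul_abs_sqrt_sub_sqrt (hf i hi) (hg i hi) (hf1 i hi) (hg1 i hi)

theorem le_one_of_sum_le_one_sub {ι : Type*} [Fintype ι] {a : ℝ} (ha : 0 ≤ a) {f : ι → ℝ}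
    (hf : ∀ i, 0 ≤ f i) (hs : ∑ i, f i ≤ 1 - a) (i : ι) : f i ≤ 1 := by
  linarith [single_le_sum (fun j _ => hf j) (mem_univ i)]

theorem omitted_coordinate_sqrt_estimate_general (n : ℕ) (a : ℝ)
    (ha : 0 < a) (y y' : Fin n → ℝ)
    (hy : ∀ i, 0 ≤ y i) (hy' : ∀ i, 0 ≤ y' i)
    (hs : ∑ i, y i ≤ 1 - a) (hs' : ∑ i, y' i ≤ 1 - a) :
    |Real.sqrt (1 - ∑ i, y i) - Real.sqrt (1 - ∑ i, y' i)| ≤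
      (1 / Real.sqrt a) * ∑ i, |Real.sqrt (y i) - Real.sqrt (y' i)| := by
  have hsums := abs_sum_sub_sum_le_two_mul_sum_abs_sqrt_sub_sqrt univ (fun i _ => hy i)
    (fun i _ => hy' i) (fun i _ => le_one_of_sum_le_one_sub ha.le hy hs i)
    (fun i _ => le_one_of_sum_le_one_sub ha.le hy' hs' i)
  calc |√(1 - ∑ i, y i) - √(1 - ∑ i, y' i)|
      ≤ |(1 - ∑ i, y i) - (1 - ∑ i, y' i)| / (2 * √a) :=
        abs_sqrt_sub_sqrt_le_of_le ha (by linarith) (by linarith)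
    _ = |∑ i, y i - ∑ i, y' i| / (2 * √a) := by rw [sub_sub_sub_cancel_left, abs_sub_comm]
    _ ≤ (2 * ∑ i, |√(y i) - √(y' i)|) / (2 * √a) := by gcongr
    _ = 1 / √a * ∑ i, |√(y i) - √(y' i)| := by field_simp

/-- Away from the face {∑ y_i = 1}, the square root of the omitted simplex coordinate
is controlled by the Wright–Fisher distance in the remaining coordinates. -/
theorem omitted_coordinate_sqrt_estimate (n : ℕ) (hn : 1 ≤ n) (a : ℝ)
    (ha : 0 < a) (ha1 : a ≤ 1) (y y' : Fin n → ℝ)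
    (hy : ∀ i, 0 ≤ y i) (hy' : ∀ i, 0 ≤ y' i)
    (hs : ∑ i, y i ≤ 1 - a) (hs' : ∑ i, y' i ≤ 1 - a) :
    |Real.sqrt (1 - ∑ i, y i) - Real.sqrt (1 - ∑ i, y' i)| ≤
      (1 / Real.sqrt a) * ∑ i, |Real.sqrt (y i) - Real.sqrt (y' i)| :=
  omitted_coordinate_sqrt_estimate_general n a ha y y' hy hy' hs hs'
end
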